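/- arXiv:1907.03087 — 6 statements merged into one kernel-verified Lean document; each statement's English description precedes it below -/
import Mathlib

section
/- Let p be a probability density on ℝ that is symmetric about 0 and unimodal (so the distribution is absolutely continuous). For 0 < r < r', writing R(x,s) for the mass of [x-s,x+s] and R*(s)=R(0,s), one has R(r', r) ≤ (r/r') · R*(r'). -/
open MeasureTheory

/-- For a symmetric unimodal probability density `p` on `ℝ` and `0 < r < r'`,
the mass of the interval of half-width `r` centered at `r'` is at most
`(r/r')` times the mass of `[-r', r']`. -/
theorem offcenter_mass_bound
    (p : ℝ → ℝ)
    (hp_meas : Measurable p)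
    (hp_nonneg : ∀ x, 0 ≤ p x)
    (hp_int : ∫ x, p x = 1)
    (hp_symm : ∀ x, p (-x) = p x)
    (hp_mono : AntitoneOn p (Set.Ici 0))
    (R : ℝ → ℝ → ℝ)
    (hR : ∀ x s, R x s = ∫ y in Set.Icc (x - s) (x + s), p y)
    (r r' : ℝ) (hr : 0 < r) (hrr' : r < r') :
    R r' r ≤ (r / r') * R 0 r' := by
  have hr' : 0 < r' := hr.trans hrr'
  have hint : Integrable p := by
    by_contra h
    rw [integral_undef h] at hp_int
    norm_num at hp_int
  have hII : ∀ a b : ℝ, IntervalIntegrable p volume a b :=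
    fun a b => hint.intervalIntegrable
  -- set integral over Icc equals interval integral
  have hIcc : ∀ a b : ℝ, a ≤ b → (∫ y in Set.Icc a b, p y) = ∫ y in a..b, p y := by
    intro a b hab
    rw [intervalIntegral.integral_of_le hab, integral_Icc_eq_integral_Ioc]
  -- upper bound on intervals in [0,∞)
  have ub : ∀ a b : ℝ, 0 ≤ a → a ≤ b → (∫ y in a..b, p y) ≤ (b - a) * p a := by
    intro a b ha hab
    have := intervalIntegral.integral_mono_on hab (hII a b)
      (intervalIntegrable_const (c := p a))
      (fun x hx => hp_mono ha (ha.trans hx.1) hx.1)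
    simpa [smul_eq_mul] using this
  have lb : ∀ a b : ℝ, 0 ≤ a → a ≤ b → (b - a) * p b ≤ ∫ y in a..b, p y := by
    intro a b ha hab
    have := intervalIntegral.integral_mono_on hab
      (intervalIntegrable_const (c := p b)) (hII a b)
      (fun x hx => hp_mono (ha.trans hx.1) (ha.trans hab) hx.2)
    simpa [smul_eq_mul] using this
  set A := ∫ y in (r' - r)..(r' + r), p y with hA
  set B := ∫ y in (0:ℝ)..(r' - r), p y with hBdef
  set F := ∫ y in (r' - r)..r', p y with hFdef
  set E := ∫ y in r'..(r' + r), p y with hEdef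
  have hrr0 : (0:ℝ) ≤ r' - r := by linarith
  have hBF : B + F = ∫ y in (0:ℝ)..r', p y :=
    intervalIntegral.integral_add_adjacent_intervals (hII _ _) (hII _ _)
  have hFE : F + E = A :=
    intervalIntegral.integral_add_adjacent_intervals (hII _ _) (hII _ _)
  -- symmetry: ∫ -r'..0 = ∫ 0..r'
  have hsym : (∫ y in (-r')..(0:ℝ), p y) = ∫ y in (0:ℝ)..r', p y := by
    have h := intervalIntegral.integral_comp_neg (a := (0:ℝ)) (b := r') p
    simp only [neg_zero] at h
    rw [← h]
    exact intervalIntegral.integral_congr (fun x _ => hp_symm x)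
  have hR0 : R 0 r' = 2 * (B + F) := by
    rw [hR, hBF]
    have : Set.Icc (0 - r') (0 + r') = Set.Icc (-r') r' := by norm_num
    rw [this, hIcc _ _ (by linarith)]
    rw [← intervalIntegral.integral_add_adjacent_intervals (a := -r') (b := 0) (c := r')
      (hII _ _) (hII _ _), hsym]
    ring
  have hRr : R r' r = A := by
    rw [hR, hIcc _ _ (by linarith)]
  -- key bounds
  have hF : F ≤ r * p (r' - r) := by
    have := ub (r' - r) r' hrr0 (by linarith)
    simpa using this.trans_eq (by ring)
  have hE : E ≤ r * p r' := by
    have := ub r' (r' + r) hr'.le (by linarith)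
    simpa using this.trans_eq (by ring)
  have hB : (r' - r) * p (r' - r) ≤ B := by
    have := lb 0 (r' - r) le_rfl hrr0
    simpa using this
  have hC : r' * p r' ≤ B + F := by
    have := lb 0 r' le_rfl hr'.le
    rw [hBF]
    simpa using this
  have hp1 : 0 ≤ p (r' - r) := hp_nonneg _
  have hp2 : 0 ≤ p r' := hp_nonneg _
  rw [hRr, hR0, ← hFE]
  rw [div_mul_eq_mul_div, le_div_iff₀ hr']
  nlinarith [mul_le_mul_of_nonneg_left hF (by linarith : (0:ℝ) ≤ r' - r),
    mul_le_mul_of_nonneg_left hE hr'.le,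
    mul_le_mul_of_nonneg_left hB hr.le,
    mul_le_mul_of_nonneg_left hC hr.le]
end

section
/- Let μ be a probability measure on ℝ^d that is radially symmetric and unimodal, i.e., it has density p(x) = f(‖x‖₂) for some non-increasing f : [0,∞) → [0,∞). For x ∈ ℝ^d and r > 0 let R(x,r) = μ(B(x,r)) be the mass of the closed Euclidean ball of radius r centered at x. Then for any r > 0 and any x, x' with ‖x‖₂ < ‖x'‖₂, we have R(x,r) ≥ R(x',r). -/
/-!
Let `σ` be the reflection in the perpendicular bisector of `x` and `x'`. It preserves volume
and swaps the two balls, so it maps `B(x', r) \ B(x, r)` onto `B(x, r) \ B(x', r)`. A point `y`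
at least as close to `x'` as to `x` is not moved away from the origin, which lies on the side of
`x`: the segment from `y` to `0` meets the bisector at some `p`, and
`‖σ y‖ = dist y (σ 0) ≤ dist y p + dist p 0 = ‖y‖`. As `f` is non-increasing, the density on
`B(x', r) \ B(x, r)` is dominated by its reflected copy, whose integral is the mass of
`B(x, r) \ B(x', r)`.
-/

open MeasureTheory EuclideanGeometry AffineSubspace
open scoped ENNReal

theorem measure_le_of_measure_sdiff_le {α : Type*} [MeasurableSpace α] {μ : Measure α}
    {s t : Set α} (hs : MeasurableSet s) (ht : MeasurableSet t)
    (h : μ (s \ t) ≤ μ (t \ s)) : μ s ≤ μ t := by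
  rw [← measure_inter_add_sdiff s ht, ← measure_inter_add_sdiff t hs, Set.inter_comm]
  gcongr

theorem withDensity_preimage_le_of_le_comp {α : Type*} [MeasurableSpace α] {ν : Measure α}
    {g : α → ℝ≥0∞} {σ : α → α} (hσ : MeasurePreserving σ ν ν) (hσe : MeasurableEmbedding σ)
    {s : Set α} (hs : MeasurableSet s) (hle : ∀ y ∈ σ ⁻¹' s, g y ≤ g (σ y)) :
    ν.withDensity g (σ ⁻¹' s) ≤ ν.withDensity g s :=
  calc ν.withDensity g (σ ⁻¹' s) = ∫⁻ y in σ ⁻¹' s, g y ∂ν :=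
        withDensity_apply _ (hσe.measurable hs)
    _ ≤ ∫⁻ y in σ ⁻¹' s, g (σ y) ∂ν := setLIntegral_mono' (hσe.measurable hs) hle
    _ = ∫⁻ y in s, g y ∂ν := hσ.setLIntegral_comp_preimage_emb hσe g s
    _ = ν.withDensity g s := (withDensity_apply _ hs).symm

theorem exists_mem_segment_dist_eq {E : Type*} [SeminormedAddCommGroup E] [NormedSpace ℝ E]
    {x x' y z : E} (hy : dist y x' ≤ dist y x) (hz : dist z x ≤ dist z x') :
    ∃ p ∈ segment ℝ y z, dist p x' = dist p x :=
  (convex_segment y z).isPreconnected.intermediate_value₂ (left_mem_segment ℝ y z)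
    (right_mem_segment ℝ y z) (continuous_id.dist continuous_const).continuousOn
    (continuous_id.dist continuous_const).continuousOn hy hz

section Reflection

variable {V : Type*} [NormedAddCommGroup V] [InnerProductSpace ℝ V] [FiniteDimensional ℝ V]

instance (x x' : V) : Nonempty (perpBisector x x') :=
  ⟨⟨midpoint ℝ x x', midpoint_mem_perpBisector x x'⟩⟩

theorem reflection_perpBisector_left (x x' : V) : reflection (perpBisector x x') x = x' := by
  have hmem : x -ᵥ midpoint ℝ x x' ∈ (perpBisector x x').directionᗮ := by
    rw [direction_perpBisector, Submodule.orthogonal_orthogonal, left_vsub_midpoint,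
      ← neg_vsub_eq_vsub_rev x' x]
    exact Submodule.smul_mem _ _ (Submodule.neg_mem _ (Submodule.mem_span_singleton_self _))
  rw [reflection_apply_of_mem _ _ (midpoint_mem_perpBisector x x'),
    Submodule.reflection_mem_subspace_orthogonalComplement_eq_neg hmem, neg_vsub_eq_vsub_rev,
    ← Equiv.pointReflection_apply, Equiv.pointReflection_midpoint_left]

theorem reflection_perpBisector_right (x x' : V) : reflection (perpBisector x x') x' = x := by
  simpa using (congrArg (reflection (perpBisector x x')) (reflection_perpBisector_left x x')).symm

theorem dist_reflection_perpBisector_le {x x' y z : V} (hy : dist y x' ≤ dist y x)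
    (hz : dist z x ≤ dist z x') : dist y (reflection (perpBisector x x') z) ≤ dist y z := by
  obtain ⟨p, hp, hpx⟩ := exists_mem_segment_dist_eq hy hz
  have hp_mem : p ∈ perpBisector x x' := mem_perpBisector_iff_dist_eq.2 hpx.symm
  calc dist y (reflection (perpBisector x x') z)
      ≤ dist y p + dist p (reflection (perpBisector x x') z) := dist_triangle _ _ _
    _ = dist y p + dist p z := by rw [dist_reflection_eq_of_mem _ hp_mem z]
    _ = dist y z := dist_add_dist_of_mem_segment hp

theorem norm_reflection_perpBisector_le {x x' y : V} (hx : ‖x‖ ≤ ‖x'‖)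
    (hy : dist y x' ≤ dist y x) : ‖reflection (perpBisector x x') y‖ ≤ ‖y‖ := by
  have := dist_reflection_perpBisector_le hy (z := 0) (by simpa using hx)
  rwa [dist_reflection, dist_zero_right, dist_zero_right] at this

variable [MeasurableSpace V] [BorelSpace V]

theorem IsometryEquiv.measurePreserving_volume (e : V ≃ᵢ V) :
    MeasurePreserving e volume volume := by
  rw [← InnerProductSpace.euclideanHausdorffMeasure_eq_volume]
  exact e.measurePreserving_euclideanHausdorffMeasure _

end Reflection

theorem ball_mass_radially_monotone_general
    (d : ℕ) (f : ℝ → ℝ≥0∞)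
    (hf_mono : AntitoneOn f (Set.Ici 0))
    (μ : Measure (EuclideanSpace ℝ (Fin d)))
    (hμ : μ = volume.withDensity (fun x => f ‖x‖)) :
    ∀ r > (0:ℝ), ∀ x x' : EuclideanSpace ℝ (Fin d), ‖x‖ < ‖x'‖ →
      μ (Metric.closedBall x' r) ≤ μ (Metric.closedBall x r) := by
  intro r _ x x' hxx'
  set σ := (reflection (perpBisector x x')).toIsometryEquiv
  have hpre : σ ⁻¹' (Metric.closedBall x r \ Metric.closedBall x' r) =
      Metric.closedBall x' r \ Metric.closedBall x r := by
    rw [Set.preimage_sdiff, σ.preimage_closedBall, σ.preimage_closedBall]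
    simp [σ, reflection_perpBisector_left, reflection_perpBisector_right]
  refine measure_le_of_measure_sdiff_le measurableSet_closedBall measurableSet_closedBall ?_
  rw [hμ, ← hpre]
  refine withDensity_preimage_le_of_le_comp σ.measurePreserving_volume
    σ.toHomeomorph.measurableEmbedding (measurableSet_closedBall.diff measurableSet_closedBall) ?_
  intro y hy
  rw [hpre] at hy
  exact hf_mono (norm_nonneg _) (norm_nonneg _)
    (norm_reflection_perpBisector_le hxx'.le (hy.1.trans (not_le.1 hy.2).le))

/-- For a radially symmetric unimodal probability measure `μ` on `ℝ^d`
(with density `f(‖x‖)` for a non-increasing `f`), the ball-mass function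
`x ↦ μ(B(x,r))` is radially non-increasing: if `‖x‖ < ‖x'‖` then
`μ(B(x,r)) ≥ μ(B(x',r))`. -/
theorem ball_mass_radially_monotone
    (d : ℕ) (f : ℝ → ℝ≥0∞) (hf_meas : Measurable f)
    (hf_mono : AntitoneOn f (Set.Ici 0))
    (μ : Measure (EuclideanSpace ℝ (Fin d)))
    (hμ : μ = volume.withDensity (fun x => f ‖x‖))
    (hprob : IsProbabilityMeasure μ) :
    ∀ r > (0:ℝ), ∀ x x' : EuclideanSpace ℝ (Fin d), ‖x‖ < ‖x'‖ →
      μ (Metric.closedBall x' r) ≤ μ (Metric.closedBall x r) :=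
  ball_mass_radially_monotone_general d f hf_mono μ hμ
end

section
/- Let Σ be a positive-definite d×d matrix and let μ be a probability measure on ℝ^d with density p(x) = f(xᵀ Σ^{-1} x) for some non-increasing f : [0,∞) → [0,∞). For 0 < r₁ < r₂ and any x₀ with ‖x₀‖₂ = r₂, the mass of the Euclidean ball B(x₀, r₁) under μ satisfies μ(B(x₀,r₁)) ≤ C · (r₁ λ_max(Σ) / (r₂ λ_min(Σ)))^d for an absolute constant C (independent of μ, r₁, r₂). -/
/-!
Since `xᵀΣ⁻¹x` is squeezed between `‖x‖² / λmax` and `‖x‖² / λmin`, every superlevel set `A` of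
the density is star-shaped up to the factor `κ = λmax / λmin`: if `x ∈ A` and `κ ‖y‖ < ‖x‖`, then
`y ∈ A`. Let `ρ` be the largest norm of a point of `A ∩ B(x₀, r₁)`. Then `A` contains the ball
`B(0, ρ / κ)`, while `A ∩ B(x₀, r₁)` lies in the lens `B(x₀, r₁) ∩ B(0, ρ)`, which fits in a ball of
radius `r₁ ρ / r₂`. Comparing volumes gives `vol (A ∩ B(x₀, r₁)) ≤ (κ r₁ / r₂)^d vol A`, and the
layer-cake formula turns this into the theorem with `C = 1`.
-/

open MeasureTheory Metric Set Module
open scoped ENNReal RealInnerProductSpace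

namespace LinearMap.IsPositive

variable {E : Type*} [NormedAddCommGroup E] [InnerProductSpace ℝ E] {T : E →ₗ[ℝ] E}

theorem inner_apply_sq_le (hT : T.IsPositive) (x y : E) :
    ⟪T x, y⟫ ^ 2 ≤ ⟪T x, x⟫ * ⟪T y, y⟫ := by
  have hsymm : ⟪T y, x⟫ = ⟪T x, y⟫ := by rw [hT.isSymmetric, real_inner_comm]
  have hquad : ∀ τ : ℝ, 0 ≤ ⟪T y, y⟫ * (τ * τ) + 2 * ⟪T x, y⟫ * τ + ⟪T x, x⟫ := by
    intro τ
    have := hT.inner_nonneg_left (x + τ • y)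
    simp only [map_add, map_smul, inner_add_left, inner_add_right, real_inner_smul_left,
      real_inner_smul_right, hsymm] at this
    linarith
  have := discrim_le_zero hquad
  rw [discrim] at this
  linarith

theorem norm_apply_sq_le_mul_inner (hT : T.IsPositive) {c : ℝ}
    (hc : ∀ x, ⟪T x, x⟫ ≤ c * ‖x‖ ^ 2) (y : E) : ‖T y‖ ^ 2 ≤ c * ⟪T y, y⟫ := by
  rcases (norm_nonneg (T y)).eq_or_lt with h | h
  · rw [← h, norm_eq_zero.1 h.symm, inner_zero_left]; simp
  have key : (‖T y‖ ^ 2) ^ 2 ≤ ⟪T y, y⟫ * (c * ‖T y‖ ^ 2) := by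
    calc (‖T y‖ ^ 2) ^ 2 = ⟪T y, T y⟫ ^ 2 := by rw [real_inner_self_eq_norm_sq]
      _ ≤ ⟪T y, y⟫ * ⟪T (T y), T y⟫ := hT.inner_apply_sq_le _ _
      _ ≤ ⟪T y, y⟫ * (c * ‖T y‖ ^ 2) := by gcongr; exacts [hT.inner_nonneg_left y, hc _]
  nlinarith [pow_pos h 2]

theorem mul_inner_le_norm_apply_sq (hT : T.IsPositive) {c : ℝ}
    (hc : ∀ x, c * ‖x‖ ^ 2 ≤ ⟪T x, x⟫) (y : E) : c * ⟪T y, y⟫ ≤ ‖T y‖ ^ 2 := by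
  have h0 := hT.inner_nonneg_left y
  rcases le_or_gt c 0 with hc0 | hc0
  · nlinarith [sq_nonneg ‖T y‖]
  rcases h0.eq_or_lt with h | h
  · rw [← h, mul_zero]; positivity
  have hcs : ⟪T y, y⟫ ^ 2 ≤ (‖T y‖ * ‖y‖) ^ 2 := pow_le_pow_left₀ h0 (real_inner_le_norm _ _) 2
  nlinarith [hc y, mul_le_mul_of_nonneg_left (hc y) (sq_nonneg ‖T y‖)]

end LinearMap.IsPositive

theorem Matrix.sum_sum_mul_mul_eq_inner {n : Type*} [Fintype n] [DecidableEq n] (N : Matrix n n ℝ)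
    (x : EuclideanSpace ℝ n) : ∑ i, ∑ j, x i * N i j * x j = ⟪N.toEuclideanLin x, x⟫ := by
  simp [EuclideanSpace.inner_eq_star_dotProduct, dotProduct, mulVec, Finset.mul_sum, mul_assoc,
    mul_comm, mul_left_comm]

theorem Matrix.PosDef.inv_quadratic_bounds {n : Type*} [Fintype n] [DecidableEq n]
    {M : Matrix n n ℝ} (hM : M.PosDef) {lmin lmax : ℝ}
    (hb : ∀ x : EuclideanSpace ℝ n,
      lmin * ‖x‖ ^ 2 ≤ ∑ i, ∑ j, x i * M i j * x j ∧
      ∑ i, ∑ j, x i * M i j * x j ≤ lmax * ‖x‖ ^ 2)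
    (x : EuclideanSpace ℝ n) :
    ‖x‖ ^ 2 ≤ lmax * ∑ i, ∑ j, x i * M⁻¹ i j * x j ∧
      lmin * ∑ i, ∑ j, x i * M⁻¹ i j * x j ≤ ‖x‖ ^ 2 := by
  simp only [sum_sum_mul_mul_eq_inner] at hb ⊢
  have hT : M.toEuclideanLin.IsPositive := isPositive_toEuclideanLin_iff.2 hM.posSemidef
  set y := M⁻¹.toEuclideanLin x
  have hy : M.toEuclideanLin y = x := by
    ext i
    simp [y, mulVec_mulVec, mul_nonsing_inv M ((isUnit_iff_isUnit_det M).1 hM.isUnit)]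
  rw [← hy, real_inner_comm]
  exact ⟨hT.norm_apply_sq_le_mul_inner (fun z => (hb z).2) y,
    hT.mul_inner_le_norm_apply_sq (fun z => (hb z).1) y⟩

theorem exists_closedBall_inter_closedBall_subset {E : Type*} [NormedAddCommGroup E]
    [InnerProductSpace ℝ E] {x₀ : E} {r : ℝ} (hr₀ : 0 < r) (hr : r ≤ ‖x₀‖) (ρ : ℝ) :
    ∃ c, closedBall x₀ r ∩ closedBall 0 ρ ⊆ closedBall c (r * ρ / ‖x₀‖) := by
  have hx₀ : 0 < ‖x₀‖ := hr₀.trans_le hr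
  rcases le_or_gt ρ ‖x₀‖ with hρ | hρ
  · set t := (ρ ^ 2 + ‖x₀‖ ^ 2 - r ^ 2) / (2 * ‖x₀‖ ^ 2) with ht
    -- `t • x₀` is the centre of the intersection of the spheres `‖x‖ = ρ` and `‖x - x₀‖ = r`.
    refine ⟨t • x₀, fun x ⟨hxr, hxρ⟩ => ?_⟩
    rw [mem_closedBall_iff_norm] at hxr ⊢
    rw [mem_closedBall_zero_iff] at hxρ
    have hρ0 : 0 ≤ ρ := (norm_nonneg x).trans hxρ
    have ht0 : 0 ≤ t := div_nonneg (by nlinarith) (by positivity)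
    have ht1 : t ≤ 1 := (div_le_one (by positivity)).2 (by nlinarith)
    have hinner : ‖x‖ ^ 2 + ‖x₀‖ ^ 2 - r ^ 2 ≤ 2 * ⟪x, x₀⟫ := by
      nlinarith [norm_sub_sq_real x x₀, pow_le_pow_left₀ (norm_nonneg _) hxr 2]
    have hexp : ‖x - t • x₀‖ ^ 2 = ‖x‖ ^ 2 - 2 * t * ⟪x, x₀⟫ + t ^ 2 * ‖x₀‖ ^ 2 := by
      rw [norm_sub_sq_real, real_inner_smul_right, norm_smul, Real.norm_of_nonneg ht0]; ring
    have hsq : (‖x - t • x₀‖ * ‖x₀‖) ^ 2 ≤ (r * ρ) ^ 2 := by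
      have hx2 : ‖x‖ ^ 2 ≤ ρ ^ 2 := pow_le_pow_left₀ (norm_nonneg _) hxρ 2
      have htx : t * (2 * ‖x₀‖ ^ 2) = ρ ^ 2 + ‖x₀‖ ^ 2 - r ^ 2 := by rw [ht]; field_simp
      rw [mul_pow, hexp]
      nlinarith [mul_le_mul_of_nonneg_left hinner (mul_nonneg ht0 (sq_nonneg ‖x₀‖)),
        mul_le_mul_of_nonneg_left hx2 (mul_nonneg (sub_nonneg.2 ht1) (sq_nonneg ‖x₀‖)),
        sq_nonneg (ρ ^ 2 - ‖x₀‖ ^ 2 + r ^ 2)]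
    rw [le_div_iff₀ hx₀]
    exact pow_le_pow_iff_left₀ (by positivity) (by positivity) two_ne_zero |>.1 hsq
  · refine ⟨x₀, inter_subset_left.trans (closedBall_subset_closedBall ?_)⟩
    rw [le_div_iff₀ hx₀]
    nlinarith

namespace MeasureTheory.Measure

theorem withDensity_apply_le_mul_of_superlevel {α : Type*} [MeasurableSpace α] (ν : Measure α)
    {g : α → ℝ} (hg : Measurable g) (hg0 : 0 ≤ g) {B : Set α}
    (hB : MeasurableSet B) {c : ℝ≥0∞}
    (h : ∀ t, ν ({x | t < g x} ∩ B) ≤ c * ν {x | t < g x}) :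
    ν.withDensity (fun x => ENNReal.ofReal (g x)) B ≤
      c * ν.withDensity (fun x => ENNReal.ofReal (g x)) univ := by
  have hanti : Antitone fun t => ν {x | t < g x} :=
    fun s t hst => measure_mono fun x (hx : t < g x) => hst.trans_lt hx
  rw [withDensity_apply _ hB, withDensity_apply _ MeasurableSet.univ, restrict_univ,
    lintegral_eq_lintegral_meas_lt _ (ae_of_all _ hg0) hg.aemeasurable,
    lintegral_eq_lintegral_meas_lt _ (ae_of_all _ hg0) hg.aemeasurable,
    ← lintegral_const_mul _ hanti.measurable]
  refine lintegral_mono fun t => ?_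
  rw [restrict_apply (measurableSet_lt measurable_const hg)]
  exact h t

section AddHaar

variable {E : Type*} [NormedAddCommGroup E] [InnerProductSpace ℝ E] [FiniteDimensional ℝ E]
  [MeasurableSpace E] [BorelSpace E] [Nontrivial E] (μ : Measure E) [μ.IsAddHaarMeasure]

theorem addHaar_inter_closedBall_le {A : Set E} {κ r : ℝ} (hκ : 0 < κ)
    (hA : ∀ x ∈ A, ∀ y, κ * ‖y‖ < ‖x‖ → y ∈ A) {x₀ : E} (hr₀ : 0 < r) (hr : r ≤ ‖x₀‖) :
    μ (A ∩ closedBall x₀ r) ≤ ENNReal.ofReal ((κ * r / ‖x₀‖) ^ finrank ℝ E) * μ A := by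
  set S := A ∩ closedBall x₀ r
  rcases S.eq_empty_or_nonempty with hS | ⟨z, hz⟩
  · simp [hS]
  have hbdd : BddAbove ((‖·‖) '' S) :=
    ⟨‖x₀‖ + r, forall_mem_image.2 fun x hx => norm_le_of_mem_closedBall hx.2⟩
  set ρ := sSup ((‖·‖) '' S)
  have hρ : 0 ≤ ρ := (norm_nonneg z).trans (le_csSup hbdd (mem_image_of_mem _ hz))
  have hball : ball 0 (ρ / κ) ⊆ A := by
    intro y hy
    rw [mem_ball_zero_iff, lt_div_iff₀ hκ, mul_comm] at hy
    obtain ⟨_, ⟨x, hx, rfl⟩, hlt⟩ := exists_lt_of_lt_csSup ⟨_, mem_image_of_mem _ hz⟩ hy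
    exact hA x hx.1 y hlt
  obtain ⟨c, hc⟩ := exists_closedBall_inter_closedBall_subset hr₀ hr ρ
  have hS : S ⊆ closedBall c (r * ρ / ‖x₀‖) := fun x hx =>
    hc ⟨hx.2, mem_closedBall_zero_iff.2 (le_csSup hbdd (mem_image_of_mem _ hx))⟩
  have hx₀ : 0 < ‖x₀‖ := hr₀.trans_le hr
  calc μ S ≤ μ (closedBall c (r * ρ / ‖x₀‖)) := measure_mono hS
    _ = ENNReal.ofReal ((κ * r / ‖x₀‖) ^ finrank ℝ E) * μ (ball 0 (ρ / κ)) := by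
      rw [addHaar_closedBall _ _ (by positivity), addHaar_ball μ 0 (r := ρ / κ) (by positivity),
        ← mul_assoc, ← ENNReal.ofReal_mul (by positivity), ← mul_pow,
        show κ * r / ‖x₀‖ * (ρ / κ) = r * ρ / ‖x₀‖ by field_simp]
    _ ≤ _ := by gcongr

theorem withDensity_antitoneOn_comp_closedBall_le {q : E → ℝ} (hq : Measurable q)
    {lmin lmax : ℝ} (hlmin : 0 < lmin) (hll : lmin ≤ lmax)
    (hq_upper : ∀ x, ‖x‖ ^ 2 ≤ lmax * q x) (hq_lower : ∀ x, lmin * q x ≤ ‖x‖ ^ 2)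
    {f : ℝ → ℝ} (hf : AntitoneOn f (Ici 0)) (hf0 : ∀ t, 0 ≤ f t)
    {x₀ : E} {r : ℝ} (hr₀ : 0 < r) (hr : r ≤ ‖x₀‖) :
    μ.withDensity (fun x => ENNReal.ofReal (f (q x))) (closedBall x₀ r) ≤
      ENNReal.ofReal ((r * lmax / (‖x₀‖ * lmin)) ^ finrank ℝ E) *
        μ.withDensity (fun x => ENNReal.ofReal (f (q x))) univ := by
  have hlmax : 0 < lmax := hlmin.trans_le hll
  have hq0 : ∀ x, 0 ≤ q x := fun x =>
    nonneg_of_mul_nonneg_right ((sq_nonneg ‖x‖).trans (hq_upper x)) hlmax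
  set κ := lmax / lmin
  have hκ : 1 ≤ κ := (one_le_div hlmin).2 hll
  have hq_mono : ∀ x y, κ * ‖y‖ < ‖x‖ → q y ≤ q x := by
    intro x y hxy
    have hy : κ * ‖y‖ ^ 2 ≤ ‖x‖ ^ 2 := by
      nlinarith [norm_nonneg y, mul_le_mul_of_nonneg_right hκ (norm_nonneg y)]
    refine le_of_mul_le_mul_left ?_ hlmax
    calc lmax * q y = κ * (lmin * q y) := by simp only [κ]; field_simp
      _ ≤ κ * ‖y‖ ^ 2 := by gcongr; exact hq_lower y
      _ ≤ lmax * q x := hy.trans (hq_upper x)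
  have hfq : (fun x => f (q x)) = (fun t => f (max t 0)) ∘ q := by
    ext x; simp [max_eq_left (hq0 x)]
  have hmeas : Measurable fun x => f (q x) := by
    rw [hfq]
    exact (Antitone.measurable fun s t hst =>
      hf (le_max_right s 0) (le_max_right t 0) (max_le_max_right 0 hst)).comp hq
  refine withDensity_apply_le_mul_of_superlevel μ hmeas (fun x => hf0 _) measurableSet_closedBall
    fun t => ?_
  have hstar : ∀ x ∈ {x | t < f (q x)}, ∀ y, κ * ‖y‖ < ‖x‖ → y ∈ {x | t < f (q x)} :=
    fun x hx y hxy => hx.trans_le (hf (hq0 y) (hq0 x) (hq_mono x y hxy))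
  convert addHaar_inter_closedBall_le μ (zero_lt_one.trans_le hκ) hstar hr₀ hr using 4
  ring

end AddHaar

end MeasureTheory.Measure

/-- Elliptically symmetric unimodal distributions: there is an absolute constant
`C > 0` such that for any positive-definite `Σ` on `ℝ^d` with eigenvalue bounds
`λmin, λmax`, any probability measure with density `f(xᵀΣ⁻¹x)` for non-increasing
`f`, any `0 < r₁ < r₂`, and any `x₀` with `‖x₀‖ = r₂`, the mass of `B(x₀, r₁)`
is at most `C · (r₁ λmax / (r₂ λmin))^d`. -/
theorem elliptical_offcenter_mass_bound :
    ∃ C : ℝ, 0 < C ∧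
      ∀ (d : ℕ) (M : Matrix (Fin d) (Fin d) ℝ), M.PosDef →
      ∀ (lmin lmax : ℝ), 0 < lmin →
      (∀ x : EuclideanSpace ℝ (Fin d),
        lmin * ‖x‖ ^ 2 ≤ ∑ i, ∑ j, x i * M i j * x j ∧
        ∑ i, ∑ j, x i * M i j * x j ≤ lmax * ‖x‖ ^ 2) →
      ∀ (f : ℝ → ℝ), AntitoneOn f (Set.Ici 0) → (∀ t, 0 ≤ f t) →
      ∀ (μ : Measure (EuclideanSpace ℝ (Fin d))),
        μ = volume.withDensity
          (fun x => ENNReal.ofReal (f (∑ i, ∑ j, x i * (M⁻¹) i j * x j))) →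
        IsProbabilityMeasure μ →
      ∀ (r₁ r₂ : ℝ), 0 < r₁ → r₁ < r₂ →
      ∀ x₀ : EuclideanSpace ℝ (Fin d), ‖x₀‖ = r₂ →
        (μ (Metric.closedBall x₀ r₁)).toReal ≤
          C * (r₁ * lmax / (r₂ * lmin)) ^ d := by
  refine ⟨1, one_pos, fun d M hM lmin lmax hlmin hb f hf hf0 μ hμ _ r₁ r₂ hr₁ hr₁₂ x₀ hx₀ => ?_⟩
  rw [one_mul]
  rcases Nat.eq_zero_or_pos d with rfl | hd
  · simpa using ENNReal.toReal_mono ENNReal.one_ne_top prob_le_one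
  have : Nonempty (Fin d) := ⟨⟨0, hd⟩⟩
  have hll : lmin ≤ lmax := by
    have := hb (EuclideanSpace.single ⟨0, hd⟩ 1)
    simp only [PiLp.norm_single, norm_one, one_pow, mul_one] at this
    exact this.1.trans this.2
  have hmass := Measure.withDensity_antitoneOn_comp_closedBall_le volume (by fun_prop) hlmin hll
    (fun x => (hM.inv_quadratic_bounds hb x).1) (fun x => (hM.inv_quadratic_bounds hb x).2) hf hf0
    hr₁ (hx₀ ▸ hr₁₂.le)
  rw [← hμ, measure_univ, mul_one, finrank_euclideanSpace_fin, hx₀] at hmass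
  have hlmax := hlmin.trans_le hll
  have hr₂ := hr₁.trans hr₁₂
  exact ENNReal.toReal_le_of_le_ofReal (by positivity) hmass
end

section
/- Let P₁ = (1−p)·N(μ₁, σ₁²) + p·N(μ₁, σ₂²) and P₂ = (1−p)·N(μ₂, σ₁²) + p·N(μ₂, σ₂²) be two-component Gaussian mixtures on ℝ with 0 < σ₂ ≤ σ₁ and 0 < p ≤ 1/2. Then the Kullback–Leibler divergence satisfies KL(P₁‖P₂) ≤ (μ₁−μ₂)²/(2σ₁²) + E_{x∼P₁}[y(x)] − E_{x∼P₁}[z(x)] + E_{x∼P₁}[z(x)²], where y(x) = (p/(1−p))(σ₁/σ₂) exp(−(x−μ₁)²/(2σ₂²) + (x−μ₁)²/(2σ₁²)) and z(x) is defined analogously with μ₂. In particular, the elementary inequality log((1+y)/(1+z)) ≤ y − z + z² for y, z > 0 holds. -/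
open MeasureTheory ProbabilityTheory Real NNReal

/-! Writing each mixture as `(1 - p) g_{σ₁} (1 + r)`, with `r` the likelihood ratio of its narrow
component to its wide one, the log-likelihood ratio `log (q₁ / q₂)` splits into the log-ratio of
the two wide Gaussians, an affine function of `t` whose `q₁`-mean is `(μ₁ - μ₂)² / (2σ₁²)`, plus
`log ((1 + y) / (1 + z))`. As `σ₂ ≤ σ₁`, the ratios `y` and `z` are bounded by
`p σ₁ / ((1 - p) σ₂)`, so every term is integrable, and the last one is bounded pointwise by
`y - z + z²`. -/

lemma log_one_add_div_one_add_le_left {y z : ℝ} (hy : 0 ≤ y) (hz : 0 ≤ z) :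
    log ((1 + y) / (1 + z)) ≤ y :=
  (log_le_sub_one_of_pos (by positivity)).trans
    (by linarith [div_le_self (by linarith : (0:ℝ) ≤ 1 + y) (by linarith : (1:ℝ) ≤ 1 + z)])

lemma abs_log_one_add_div_one_add_le {y z : ℝ} (hy : 0 ≤ y) (hz : 0 ≤ z) :
    |log ((1 + y) / (1 + z))| ≤ max y z := by
  refine abs_le.2 ⟨?_, (log_one_add_div_one_add_le_left hy hz).trans (le_max_left y z)⟩
  rw [neg_le, ← log_inv, inv_div]
  exact (log_one_add_div_one_add_le_left hz hy).trans (le_max_right y z)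

/-- `log u ≤ u - 1`, then `1 / (1 + z) ≥ 1 - z`. -/
lemma log_one_add_div_one_add_le {y z : ℝ} (hy : 0 ≤ y) (hz : 0 ≤ z) :
    log ((1 + y) / (1 + z)) ≤ y - z + z ^ 2 :=
  calc log ((1 + y) / (1 + z)) ≤ (1 + y) / (1 + z) - 1 := log_le_sub_one_of_pos (by positivity)
    _ = (y - z) / (1 + z) := by field_simp; ring
    _ ≤ y - z + z ^ 2 := by
      rw [div_le_iff₀ (by positivity)]
      nlinarith [mul_nonneg hy hz, pow_nonneg hz 3]

section Perturbation

variable {α : Type*} [MeasurableSpace α] {μ : Measure α} {q y z : α → ℝ} {C : ℝ}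

lemma integrable_mul_log_one_add_div_one_add (hq : Integrable q μ) (hy : Measurable y)
    (hz : Measurable z) (hy0 : ∀ x, 0 ≤ y x) (hz0 : ∀ x, 0 ≤ z x) (hyC : ∀ x, y x ≤ C)
    (hzC : ∀ x, z x ≤ C) :
    Integrable (fun x ↦ q x * log ((1 + y x) / (1 + z x))) μ :=
  hq.mul_bdd ((hy.const_add 1).div (hz.const_add 1)).log.aestronglyMeasurable <|
    ae_of_all _ fun x ↦
      (abs_log_one_add_div_one_add_le (hy0 x) (hz0 x)).trans (max_le (hyC x) (hzC x))

lemma integral_mul_log_one_add_div_one_add_le (hq : Integrable q μ) (hq0 : ∀ x, 0 ≤ q x)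
    (hy : Measurable y) (hz : Measurable z) (hy0 : ∀ x, 0 ≤ y x) (hz0 : ∀ x, 0 ≤ z x)
    (hyC : ∀ x, y x ≤ C) (hzC : ∀ x, z x ≤ C) :
    ∫ x, q x * log ((1 + y x) / (1 + z x)) ∂μ ≤
      (∫ x, q x * y x ∂μ) - (∫ x, q x * z x ∂μ) + ∫ x, q x * z x ^ 2 ∂μ := by
  have hqy : Integrable (fun x ↦ q x * y x) μ := hq.mul_bdd hy.aestronglyMeasurable <|
    ae_of_all _ fun x ↦ (abs_of_nonneg (hy0 x)).trans_le (hyC x)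
  have hqz : Integrable (fun x ↦ q x * z x) μ := hq.mul_bdd hz.aestronglyMeasurable <|
    ae_of_all _ fun x ↦ (abs_of_nonneg (hz0 x)).trans_le (hzC x)
  have hqz2 : Integrable (fun x ↦ q x * z x ^ 2) μ := hq.mul_bdd (by fun_prop) <|
    ae_of_all _ fun x ↦ by
      rw [norm_pow, Real.norm_of_nonneg (hz0 x)]
      exact pow_le_pow_left₀ (hz0 x) (hzC x) 2
  have hqyz : Integrable (fun x ↦ q x * y x - q x * z x) μ := hqy.sub hqz
  rw [← integral_sub hqy hqz, ← integral_add hqyz hqz2]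
  refine integral_mono (integrable_mul_log_one_add_div_one_add hq hy hz hy0 hz0 hyC hzC)
    (hqyz.add hqz2) fun x ↦ ?_
  calc q x * log ((1 + y x) / (1 + z x)) ≤ q x * (y x - z x + z x ^ 2) :=
        mul_le_mul_of_nonneg_left (log_one_add_div_one_add_le (hy0 x) (hz0 x)) (hq0 x)
    _ = q x * y x - q x * z x + q x * z x ^ 2 := by ring

end Perturbation

section MeanShift

variable {ν : Measure ℝ} [IsProbabilityMeasure ν]

lemma sq_sub_sq_div_eq (t m μ w : ℝ) :
    ((t - μ) ^ 2 - (t - m) ^ 2) / (2 * w) = (m - μ) / w * t + (μ ^ 2 - m ^ 2) / (2 * w) := by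
  ring

lemma integrable_sq_sub_sq_div (hν : Integrable (fun t ↦ t) ν) (m μ w : ℝ) :
    Integrable (fun t ↦ ((t - μ) ^ 2 - (t - m) ^ 2) / (2 * w)) ν := by
  simp_rw [sq_sub_sq_div_eq]
  exact (hν.const_mul _).add (integrable_const _)

lemma integral_sq_sub_sq_div {m : ℝ} (hν : Integrable (fun t ↦ t) ν) (hm : ∫ t, t ∂ν = m)
    (μ w : ℝ) :
    ∫ t, ((t - μ) ^ 2 - (t - m) ^ 2) / (2 * w) ∂ν = (m - μ) ^ 2 / (2 * w) := by
  simp_rw [sq_sub_sq_div_eq]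
  rw [integral_add (hν.const_mul _) (integrable_const _), integral_const_mul, integral_const,
    hm, probReal_univ, one_smul]
  ring

end MeanShift

lemma gaussianPDFReal_toNNReal_sq (m : ℝ) {s : ℝ} (hs : 0 < s) (t : ℝ) :
    gaussianPDFReal m (s ^ 2).toNNReal t = exp (-(t - m) ^ 2 / (2 * s ^ 2)) / (s * √(2 * π)) := by
  rw [gaussianPDFReal, Real.coe_toNNReal _ (sq_nonneg s), sqrt_mul' _ (sq_nonneg s),
    sqrt_sq hs.le]
  ring

lemma toNNReal_sq_ne_zero {s : ℝ} (hs : s ≠ 0) : (s ^ 2).toNNReal ≠ 0 :=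
  (Real.toNNReal_pos.2 (by positivity)).ne'

lemma log_gaussianPDFReal_div_gaussianPDFReal {v : ℝ≥0} (hv : v ≠ 0) (μ₁ μ₂ t : ℝ) :
    log (gaussianPDFReal μ₁ v t / gaussianPDFReal μ₂ v t) =
      ((t - μ₂) ^ 2 - (t - μ₁) ^ 2) / (2 * v) := by
  have hc : (√(2 * π * v))⁻¹ ≠ 0 := inv_ne_zero (sqrt_ne_zero'.2 (by positivity))
  rw [gaussianPDFReal, gaussianPDFReal, mul_div_mul_left _ _ hc, ← exp_sub, log_exp]
  ring

lemma integrable_gaussianPDFReal_mul {m : ℝ} {v : ℝ≥0} (hv : v ≠ 0) {f : ℝ → ℝ}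
    (hf : Integrable f (gaussianReal m v)) :
    Integrable (fun t ↦ gaussianPDFReal m v t * f t) := by
  rw [gaussianReal_of_var_ne_zero _ hv, integrable_withDensity_iff_integrable_smul'
    (measurable_gaussianPDF _ _) (ae_of_all _ fun _ ↦ gaussianPDF_lt_top)] at hf
  simpa [toReal_gaussianPDF] using hf

lemma integrable_id_gaussianReal (m : ℝ) (v : ℝ≥0) :
    Integrable (fun t ↦ t) (gaussianReal m v) :=
  (memLp_id_gaussianReal 1).integrable le_rfl

section Mixture

variable {p σ₁ σ₂ : ℝ}

noncomputable def gaussianMixPDF (p σ₁ σ₂ m t : ℝ) : ℝ :=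
  (1 - p) * gaussianPDFReal m (σ₁ ^ 2).toNNReal t + p * gaussianPDFReal m (σ₂ ^ 2).toNNReal t

/-- The likelihood ratio `p g_{σ₂} / ((1 - p) g_{σ₁})` of the two components of the mixture
centred at `m`. -/
noncomputable def gaussianMixRatio (p σ₁ σ₂ m t : ℝ) : ℝ :=
  p / (1 - p) * (σ₁ / σ₂) * exp (-(t - m) ^ 2 / (2 * σ₂ ^ 2) + (t - m) ^ 2 / (2 * σ₁ ^ 2))

@[fun_prop]
lemma measurable_gaussianMixRatio (p σ₁ σ₂ m : ℝ) : Measurable (gaussianMixRatio p σ₁ σ₂ m) := by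
  unfold gaussianMixRatio
  fun_prop

lemma gaussianMixRatio_nonneg (hp : 0 ≤ p) (hp1 : p ≤ 1) (hσ₁ : 0 ≤ σ₁) (hσ₂ : 0 ≤ σ₂)
    (m t : ℝ) : 0 ≤ gaussianMixRatio p σ₁ σ₂ m t := by
  have : 0 ≤ 1 - p := by linarith
  unfold gaussianMixRatio
  positivity

lemma gaussianMixRatio_le (hp : 0 ≤ p) (hp1 : p ≤ 1) (hσ₂ : 0 < σ₂) (hσ : σ₂ ≤ σ₁) (m t : ℝ) :
    gaussianMixRatio p σ₁ σ₂ m t ≤ p / (1 - p) * (σ₁ / σ₂) := by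
  have : 0 ≤ 1 - p := by linarith
  have hσ₁ : 0 < σ₁ := hσ₂.trans_le hσ
  refine mul_le_of_le_one_right (by positivity) (exp_le_one_iff.2 ?_)
  have : (t - m) ^ 2 / (2 * σ₁ ^ 2) ≤ (t - m) ^ 2 / (2 * σ₂ ^ 2) := by gcongr
  linarith [neg_div (2 * σ₂ ^ 2) ((t - m) ^ 2)]

lemma gaussianMixPDF_nonneg (hp : 0 ≤ p) (hp1 : p ≤ 1) (m t : ℝ) :
    0 ≤ gaussianMixPDF p σ₁ σ₂ m t := by
  have : 0 ≤ 1 - p := by linarith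
  unfold gaussianMixPDF
  have := gaussianPDFReal_nonneg m (σ₁ ^ 2).toNNReal t
  have := gaussianPDFReal_nonneg m (σ₂ ^ 2).toNNReal t
  positivity

lemma integrable_gaussianMixPDF (p σ₁ σ₂ m : ℝ) : Integrable (gaussianMixPDF p σ₁ σ₂ m) :=
  ((integrable_gaussianPDFReal _ _).const_mul _).add ((integrable_gaussianPDFReal _ _).const_mul _)

lemma gaussianMixPDF_eq_mul_one_add (hp1 : p ≠ 1) (hσ₁ : 0 < σ₁) (hσ₂ : 0 < σ₂) (m t : ℝ) :
    gaussianMixPDF p σ₁ σ₂ m t =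
      (1 - p) * gaussianPDFReal m (σ₁ ^ 2).toNNReal t * (1 + gaussianMixRatio p σ₁ σ₂ m t) := by
  have : 1 - p ≠ 0 := sub_ne_zero.2 hp1.symm
  have hE : exp (-(t - m) ^ 2 / (2 * σ₂ ^ 2) + (t - m) ^ 2 / (2 * σ₁ ^ 2)) =
      exp (-(t - m) ^ 2 / (2 * σ₂ ^ 2)) / exp (-(t - m) ^ 2 / (2 * σ₁ ^ 2)) := by
    rw [← exp_sub]; ring_nf
  rw [gaussianMixPDF, gaussianMixRatio, gaussianPDFReal_toNNReal_sq m hσ₁,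
    gaussianPDFReal_toNNReal_sq m hσ₂, hE]
  field_simp

lemma log_gaussianMixPDF_div_gaussianMixPDF (hp : 0 ≤ p) (hp1 : p < 1) (hσ₁ : 0 < σ₁)
    (hσ₂ : 0 < σ₂) (μ₁ μ₂ t : ℝ) :
    log (gaussianMixPDF p σ₁ σ₂ μ₁ t / gaussianMixPDF p σ₁ σ₂ μ₂ t) =
      ((t - μ₂) ^ 2 - (t - μ₁) ^ 2) / (2 * σ₁ ^ 2) +
        log ((1 + gaussianMixRatio p σ₁ σ₂ μ₁ t) / (1 + gaussianMixRatio p σ₁ σ₂ μ₂ t)) := by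
  have hv := toNNReal_sq_ne_zero hσ₁.ne'
  have hr := gaussianMixRatio_nonneg hp hp1.le hσ₁.le hσ₂.le
  rw [gaussianMixPDF_eq_mul_one_add hp1.ne hσ₁ hσ₂, gaussianMixPDF_eq_mul_one_add hp1.ne hσ₁ hσ₂,
    mul_div_mul_comm, mul_div_mul_left _ _ (sub_ne_zero.2 hp1.ne'),
    log_mul (div_pos (gaussianPDFReal_pos _ _ _ hv) (gaussianPDFReal_pos _ _ _ hv)).ne'
      (div_pos (by linarith [hr μ₁ t]) (by linarith [hr μ₂ t])).ne',
    log_gaussianPDFReal_div_gaussianPDFReal hv, Real.coe_toNNReal _ (sq_nonneg σ₁)]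

lemma integrable_gaussianMixPDF_mul (hσ₁ : σ₁ ≠ 0) (hσ₂ : σ₂ ≠ 0) {m : ℝ} {f : ℝ → ℝ}
    (hf₁ : Integrable f (gaussianReal m (σ₁ ^ 2).toNNReal))
    (hf₂ : Integrable f (gaussianReal m (σ₂ ^ 2).toNNReal)) :
    Integrable (fun t ↦ gaussianMixPDF p σ₁ σ₂ m t * f t) := by
  simp_rw [gaussianMixPDF, add_mul, mul_assoc]
  exact ((integrable_gaussianPDFReal_mul (toNNReal_sq_ne_zero hσ₁) hf₁).const_mul _).add
    ((integrable_gaussianPDFReal_mul (toNNReal_sq_ne_zero hσ₂) hf₂).const_mul _)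

lemma integral_gaussianMixPDF_mul (hσ₁ : σ₁ ≠ 0) (hσ₂ : σ₂ ≠ 0) {m : ℝ} {f : ℝ → ℝ}
    (hf₁ : Integrable f (gaussianReal m (σ₁ ^ 2).toNNReal))
    (hf₂ : Integrable f (gaussianReal m (σ₂ ^ 2).toNNReal)) :
    ∫ t, gaussianMixPDF p σ₁ σ₂ m t * f t =
      (1 - p) * (∫ t, f t ∂gaussianReal m (σ₁ ^ 2).toNNReal) +
        p * ∫ t, f t ∂gaussianReal m (σ₂ ^ 2).toNNReal := by
  simp_rw [gaussianMixPDF, add_mul, mul_assoc]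
  rw [integral_add ((integrable_gaussianPDFReal_mul (toNNReal_sq_ne_zero hσ₁) hf₁).const_mul _)
      ((integrable_gaussianPDFReal_mul (toNNReal_sq_ne_zero hσ₂) hf₂).const_mul _),
    integral_const_mul, integral_const_mul,
    integral_gaussianReal_eq_integral_smul (toNNReal_sq_ne_zero hσ₁),
    integral_gaussianReal_eq_integral_smul (toNNReal_sq_ne_zero hσ₂)]
  simp only [smul_eq_mul]

lemma integrable_gaussianMixPDF_mul_sq_sub_sq (hσ₁ : σ₁ ≠ 0) (hσ₂ : σ₂ ≠ 0) (m μ w : ℝ) :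
    Integrable (fun t ↦ gaussianMixPDF p σ₁ σ₂ m t * (((t - μ) ^ 2 - (t - m) ^ 2) / (2 * w))) :=
  integrable_gaussianMixPDF_mul hσ₁ hσ₂
    (integrable_sq_sub_sq_div (integrable_id_gaussianReal _ _) _ _ _)
    (integrable_sq_sub_sq_div (integrable_id_gaussianReal _ _) _ _ _)

lemma integral_gaussianMixPDF_mul_sq_sub_sq (hσ₁ : σ₁ ≠ 0) (hσ₂ : σ₂ ≠ 0) (m μ w : ℝ) :
    ∫ t, gaussianMixPDF p σ₁ σ₂ m t * (((t - μ) ^ 2 - (t - m) ^ 2) / (2 * w)) =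
      (m - μ) ^ 2 / (2 * w) := by
  rw [integral_gaussianMixPDF_mul hσ₁ hσ₂
      (integrable_sq_sub_sq_div (integrable_id_gaussianReal _ _) _ _ _)
      (integrable_sq_sub_sq_div (integrable_id_gaussianReal _ _) _ _ _),
    integral_sq_sub_sq_div (integrable_id_gaussianReal _ _) integral_id_gaussianReal,
    integral_sq_sub_sq_div (integrable_id_gaussianReal _ _) integral_id_gaussianReal]
  ring

end Mixture

/-- KL bound for two-component Gaussian mixtures with common variances
`σ₁² ≥ σ₂²` and mixture weight `p ≤ 1/2`:
`KL(P₁‖P₂) ≤ (μ₁-μ₂)²/(2σ₁²) + E₁[y] − E₁[z] + E₁[z²]`, together with the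
elementary inequality `log((1+y)/(1+z)) ≤ y − z + z²` for `y, z > 0`. -/
theorem gaussian_mixture_kl_bound
    (p σ₁ σ₂ μ₁ μ₂ : ℝ) (hp : 0 < p) (hp2 : p ≤ 1 / 2)
    (hσ₂ : 0 < σ₂) (hσ : σ₂ ≤ σ₁)
    (gpdf : ℝ → ℝ → ℝ → ℝ)
    (hgpdf : ∀ m s t, gpdf m s t
      = Real.exp (-(t - m) ^ 2 / (2 * s ^ 2)) / (s * Real.sqrt (2 * Real.pi)))
    (q₁ q₂ yy zz : ℝ → ℝ)
    (hq₁ : ∀ t, q₁ t = (1 - p) * gpdf μ₁ σ₁ t + p * gpdf μ₁ σ₂ t)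
    (hq₂ : ∀ t, q₂ t = (1 - p) * gpdf μ₂ σ₁ t + p * gpdf μ₂ σ₂ t)
    (hyy : ∀ t, yy t = (p / (1 - p)) * (σ₁ / σ₂) *
      Real.exp (-(t - μ₁) ^ 2 / (2 * σ₂ ^ 2) + (t - μ₁) ^ 2 / (2 * σ₁ ^ 2)))
    (hzz : ∀ t, zz t = (p / (1 - p)) * (σ₁ / σ₂) *
      Real.exp (-(t - μ₂) ^ 2 / (2 * σ₂ ^ 2) + (t - μ₂) ^ 2 / (2 * σ₁ ^ 2))) :
    (∫ t, q₁ t * Real.log (q₁ t / q₂ t)) ≤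
        (μ₁ - μ₂) ^ 2 / (2 * σ₁ ^ 2)
        + (∫ t, q₁ t * yy t) - (∫ t, q₁ t * zz t) + (∫ t, q₁ t * zz t ^ 2) ∧
    (∀ y z : ℝ, 0 < y → 0 < z →
      Real.log ((1 + y) / (1 + z)) ≤ y - z + z ^ 2) := by
  refine ⟨?_, fun y z hy hz ↦ log_one_add_div_one_add_le hy.le hz.le⟩
  have hσ₁ : 0 < σ₁ := hσ₂.trans_le hσ
  have hp1 : p < 1 := by linarith
  have hq : ∀ m, (fun t ↦ (1 - p) * gpdf m σ₁ t + p * gpdf m σ₂ t) = gaussianMixPDF p σ₁ σ₂ m :=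
    fun m ↦ funext fun t ↦ by
      rw [gaussianMixPDF, hgpdf, hgpdf, gaussianPDFReal_toNNReal_sq m hσ₁,
        gaussianPDFReal_toNNReal_sq m hσ₂]
  obtain rfl : q₁ = gaussianMixPDF p σ₁ σ₂ μ₁ := (funext hq₁).trans (hq μ₁)
  obtain rfl : q₂ = gaussianMixPDF p σ₁ σ₂ μ₂ := (funext hq₂).trans (hq μ₂)
  obtain rfl : yy = gaussianMixRatio p σ₁ σ₂ μ₁ := funext hyy
  obtain rfl : zz = gaussianMixRatio p σ₁ σ₂ μ₂ := funext hzz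
  have hr₀ := gaussianMixRatio_nonneg hp.le hp1.le hσ₁.le hσ₂.le
  have hr := gaussianMixRatio_le hp.le hp1.le hσ₂ hσ
  simp_rw [log_gaussianMixPDF_div_gaussianMixPDF hp.le hp1 hσ₁ hσ₂, mul_add]
  rw [integral_add (integrable_gaussianMixPDF_mul_sq_sub_sq hσ₁.ne' hσ₂.ne' _ _ _)
      (integrable_mul_log_one_add_div_one_add (integrable_gaussianMixPDF _ _ _ _) (by fun_prop)
        (by fun_prop) (hr₀ μ₁) (hr₀ μ₂) (hr μ₁) (hr μ₂)),
    integral_gaussianMixPDF_mul_sq_sub_sq hσ₁.ne' hσ₂.ne']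
  linarith [integral_mul_log_one_add_div_one_add_le (integrable_gaussianMixPDF p σ₁ σ₂ μ₁)
    (gaussianMixPDF_nonneg hp.le hp1.le μ₁) (by fun_prop) (by fun_prop) (hr₀ μ₁) (hr₀ μ₂)
    (hr μ₁) (hr μ₂)]
end

section
/- Fix r > 0 and suppose (x_i, ε_i), i = 1,...,n, are independent pairs where x_i ∈ ℝ^d has a distribution absolutely continuous with respect to Lebesgue measure, ε_i ∈ ℝ is independent of x_i with a density symmetric about 0 and strictly unimodal (strictly decreasing on [0,∞) near 0), and y_i = x_iᵀβ* + ε_i. Then β* is the unique maximizer over β ∈ ℝ^d of F(β) = Σ_{i=1}^n P(|y_i − x_iᵀβ| ≤ r). -/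
/-!
Writing `Δ = β* - β`, the residual is `y_i - ⟪x_i, β⟫ = ε_i + ⟪x_i, Δ⟫`, and by independence
`P(|ε_i + ⟪x_i, Δ⟫| ≤ r)` is the average over the law of `x_i` of the mass the law of `ε_i` gives to
the window `[c - r, c + r]`, `c = -⟪x_i, Δ⟫`. For a symmetric density that is strictly decreasing
on `[0, ∞)` this mass is strictly smaller than that of the centred window whenever `c ≠ 0`, and since
`x_i` is absolutely continuous, `c ≠ 0` holds almost surely once `Δ ≠ 0`.
-/

open MeasureTheory ProbabilityTheory Set
open scoped ENNReal RealInnerProductSpace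

lemma setLIntegral_Icc_comp_const_sub (f : ℝ → ℝ≥0∞) (c a b : ℝ) :
    ∫⁻ t in Icc a b, f (c - t) = ∫⁻ t in Icc (c - b) (c - a), f t := by
  rw [(Measure.measurePreserving_sub_left volume c).setLIntegral_comp_emb
    (Homeomorph.subLeft c).measurableEmbedding f, image_const_sub_Icc]

section Window

variable {f : ℝ → ℝ≥0∞} {r c : ℝ}

lemma apply_abs_of_even (hsymm : ∀ t, f (-t) = f t) (t : ℝ) : f |t| = f t := by
  rcases abs_choice t with h | h <;> simp only [h, hsymm]

lemma setLIntegral_Icc_shift_lt_of_pos (hf : Measurable f) (hsymm : ∀ t, f (-t) = f t)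
    (hanti : StrictAntiOn f (Ici 0)) (hfin : ∫⁻ t in Icc (-r) r, f t ≠ ∞)
    (hr : 0 < r) (hc : 0 < c) :
    ∫⁻ t in Icc (c - r) (c + r), f t < ∫⁻ t in Icc (-r) r, f t := by
  -- `t ↦ c - t` maps `[-r, r]` onto `[c - r, c + r]` and `[c - r, r]` onto itself,
  -- and strictly increases `|t|` on the rest `T` of `[-r, r]`.
  set T := Icc (-r) r \ Icc (c - r) r
  have hT : MeasurableSet T := measurableSet_Icc.diff measurableSet_Icc
  have hsplit : Icc (-r) r = Icc (c - r) r ∪ T :=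
    (union_sdiff_cancel (Icc_subset_Icc_left (by linarith))).symm
  have hdisj : Disjoint (Icc (c - r) r) T := disjoint_sdiff_right
  have hT_pos : volume T ≠ 0 := by
    have hsub : Ioo (-r) (min r (c - r)) ⊆ T := fun t ⟨h₁, h₂⟩ =>
      ⟨⟨h₁.le, (h₂.trans_le (min_le_left _ _)).le⟩,
        fun h => (h₂.trans_le (min_le_right _ _)).not_ge h.1⟩
    refine (measure_mono_null hsub).mt ?_
    rw [Real.volume_Ioo, ENNReal.ofReal_eq_zero, not_le, sub_pos, lt_min_iff]
    constructor <;> linarith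
  have hlt : ∀ t ∈ T, f (c - t) < f t := by
    rintro t ⟨⟨h₁, h₂⟩, hS⟩
    have ht : t < c - r := lt_of_not_ge fun h => hS ⟨h, h₂⟩
    rw [← apply_abs_of_even hsymm t]
    exact hanti (abs_nonneg t) (show (0 : ℝ) ≤ c - t by linarith)
      ((abs_le.mpr ⟨h₁, h₂⟩).trans_lt (by linarith))
  have hfin_T : ∫⁻ t in T, f (c - t) ≠ ∞ := by
    refine ne_top_of_le_ne_top hfin ((setLIntegral_mono' hT fun t ht => (hlt t ht).le).trans ?_)
    exact lintegral_mono_set (hsplit ▸ subset_union_right)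
  have hfin_S : ∫⁻ t in Icc (c - r) r, f t ≠ ∞ :=
    ne_top_of_le_ne_top hfin (lintegral_mono_set (hsplit ▸ subset_union_left))
  calc ∫⁻ t in Icc (c - r) (c + r), f t
      = ∫⁻ t in Icc (-r) r, f (c - t) := by
        rw [setLIntegral_Icc_comp_const_sub, sub_neg_eq_add]
    _ = (∫⁻ t in Icc (c - r) r, f (c - t)) + ∫⁻ t in T, f (c - t) := by
        rw [hsplit, lintegral_union hT hdisj]
    _ = (∫⁻ t in Icc (c - r) r, f t) + ∫⁻ t in T, f (c - t) := by
        rw [setLIntegral_Icc_comp_const_sub, sub_sub_cancel]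
    _ < (∫⁻ t in Icc (c - r) r, f t) + ∫⁻ t in T, f t :=
        ENNReal.add_lt_add_left hfin_S (setLIntegral_strict_mono hT hT_pos hf hfin_T
          (ae_of_all _ hlt))
    _ = ∫⁻ t in Icc (-r) r, f t := by
        rw [hsplit, lintegral_union hT hdisj]

lemma setLIntegral_Icc_shift_lt (hf : Measurable f) (hsymm : ∀ t, f (-t) = f t)
    (hanti : StrictAntiOn f (Ici 0)) (hfin : ∫⁻ t in Icc (-r) r, f t ≠ ∞)
    (hr : 0 < r) (hc : c ≠ 0) :
    ∫⁻ t in Icc (c - r) (c + r), f t < ∫⁻ t in Icc (-r) r, f t := by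
  rcases hc.lt_or_gt with hneg | hpos
  · calc ∫⁻ t in Icc (c - r) (c + r), f t
        = ∫⁻ t in Icc (-c - r) (-c + r), f (0 - t) := by
          rw [setLIntegral_Icc_comp_const_sub]; ring_nf
      _ = ∫⁻ t in Icc (-c - r) (-c + r), f t := by simp only [zero_sub, hsymm]
      _ < ∫⁻ t in Icc (-r) r, f t :=
          setLIntegral_Icc_shift_lt_of_pos hf hsymm hanti hfin hr (neg_pos.mpr hneg)
  · exact setLIntegral_Icc_shift_lt_of_pos hf hsymm hanti hfin hr hpos

end Window

lemma StrictAntiOn.ennreal_ofReal {g : ℝ → ℝ} {s : Set ℝ} (hanti : StrictAntiOn g s)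
    (hnn : ∀ t ∈ s, 0 ≤ g t) : StrictAntiOn (fun t => ENNReal.ofReal (g t)) s :=
  fun _ ha b hb hab => ENNReal.ofReal_lt_ofReal_iff'.mpr
    ⟨hanti ha hb hab, (hnn b hb).trans_lt (hanti ha hb hab)⟩

lemma measure_inner_eq_zero {E : Type*} [NormedAddCommGroup E] [InnerProductSpace ℝ E]
    [FiniteDimensional ℝ E] [MeasurableSpace E] [BorelSpace E] (μ : Measure E)
    [μ.IsAddHaarMeasure] {Δ : E} (hΔ : Δ ≠ 0) : μ {v | ⟪v, Δ⟫ = 0} = 0 := by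
  have hne : (Submodule.span ℝ {Δ})ᗮ ≠ ⊤ := fun h =>
    hΔ (inner_self_eq_zero.mp (Submodule.mem_orthogonal_singleton_iff_inner_left.mp
      (h ▸ Submodule.mem_top)))
  convert Measure.addHaar_submodule μ _ hne using 2
  ext v
  exact Submodule.mem_orthogonal_singleton_iff_inner_left.symm

lemma IndepFun.measure_preimage_eq_lintegral {Ω α β : Type*} [MeasurableSpace Ω]
    [MeasurableSpace α] [MeasurableSpace β] {P : Measure Ω} [IsFiniteMeasure P]
    {X : Ω → α} {Y : Ω → β} (hX : Measurable X) (hY : Measurable Y) (hind : IndepFun X Y P)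
    {S : Set (α × β)} (hS : MeasurableSet S) :
    P ((fun ω => (X ω, Y ω)) ⁻¹' S) = ∫⁻ a, P.map Y (Prod.mk a ⁻¹' S) ∂P.map X := by
  rw [← Measure.map_apply (hX.prodMk hY) hS,
    (indepFun_iff_map_prod_eq_prod_map_map hX.aemeasurable hY.aemeasurable).mp hind,
    Measure.prod_apply hS]

lemma abs_add_le_iff_mem_Icc {t s r : ℝ} : |t + s| ≤ r ↔ t ∈ Icc (-s - r) (-s + r) := by
  rw [abs_le, mem_Icc]
  constructor <;> rintro ⟨h₁, h₂⟩ <;> constructor <;> linarith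

lemma measure_abs_add_inner_le_lt {E Ω : Type*} [NormedAddCommGroup E] [InnerProductSpace ℝ E]
    [FiniteDimensional ℝ E] [MeasurableSpace E] [BorelSpace E] (μ : Measure E)
    [μ.IsAddHaarMeasure] [MeasurableSpace Ω] {P : Measure Ω} [IsProbabilityMeasure P]
    {X : Ω → E} {ε : Ω → ℝ} (hX : Measurable X) (hε : Measurable ε) (hind : IndepFun X ε P)
    (hac : P.map X ≪ μ) {r : ℝ}
    (hwin : ∀ c ≠ 0, P.map ε (Icc (c - r) (c + r)) < P.map ε (Icc (-r) r))
    {Δ : E} (hΔ : Δ ≠ 0) :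
    P {ω | |ε ω + ⟪X ω, Δ⟫| ≤ r} < P {ω | |ε ω| ≤ r} := by
  have : IsProbabilityMeasure (P.map X) := Measure.isProbabilityMeasure_map hX.aemeasurable
  have hS : MeasurableSet {p : E × ℝ | |p.2 + ⟪p.1, Δ⟫| ≤ r} :=
    measurableSet_le (by fun_prop) measurable_const
  have hae : ∀ᵐ v ∂P.map X, -⟪v, Δ⟫ ≠ 0 := by
    rw [ae_iff]
    simpa only [neg_ne_zero, not_not] using hac (measure_inner_eq_zero μ hΔ)
  calc P {ω | |ε ω + ⟪X ω, Δ⟫| ≤ r}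
      = ∫⁻ v, P.map ε (Icc (-⟪v, Δ⟫ - r) (-⟪v, Δ⟫ + r)) ∂P.map X := by
        refine (IndepFun.measure_preimage_eq_lintegral hX hε hind hS).trans ?_
        exact lintegral_congr fun v => congr_arg _ (ext fun t => abs_add_le_iff_mem_Icc)
    _ < ∫⁻ _, P.map ε (Icc (-r) r) ∂P.map X :=
        lintegral_strict_mono (IsProbabilityMeasure.ne_zero _) aemeasurable_const
          ((lintegral_mono fun _ => prob_le_one).trans_lt (by simp)).ne
          (hae.mono fun v hv => hwin _ hv)
    _ = P {ω | |ε ω| ≤ r} := by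
        rw [lintegral_const, measure_univ, mul_one, Measure.map_apply hε measurableSet_Icc]
        simp only [preimage, mem_Icc, ← abs_le]

theorem regression_population_maximizer_general
    {Ω : Type*} [MeasurableSpace Ω] (Pr : Measure Ω) [IsProbabilityMeasure Pr]
    (n d : ℕ) (hn : 1 ≤ n) (r : ℝ) (hr : 0 < r)
    (x : Fin n → Ω → EuclideanSpace ℝ (Fin d)) (ε : Fin n → Ω → ℝ)
    (hx_meas : ∀ i, Measurable (x i)) (hε_meas : ∀ i, Measurable (ε i))
    (hxε_indep : ∀ i, IndepFun (x i) (ε i) Pr)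
    (hx_ac : ∀ i, Measure.map (x i) Pr ≪ (volume : Measure (EuclideanSpace ℝ (Fin d))))
    (g : Fin n → ℝ → ℝ) (hg_meas : ∀ i, Measurable (g i))
    (hg_nonneg : ∀ i t, 0 ≤ g i t)
    (hg_dens : ∀ i, Measure.map (ε i) Pr
      = volume.withDensity (fun t => ENNReal.ofReal (g i t)))
    (hg_symm : ∀ i t, g i (-t) = g i t)
    (hg_anti : ∀ i, StrictAntiOn (g i) (Set.Ici 0))
    (βstar : EuclideanSpace ℝ (Fin d))
    (y : Fin n → Ω → ℝ)
    (hy : ∀ i ω, y i ω = (inner ℝ (x i ω) βstar : ℝ) + ε i ω) :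
    ∀ β : EuclideanSpace ℝ (Fin d), β ≠ βstar →
      ∑ i, (Pr {ω | |y i ω - (inner ℝ (x i ω) β : ℝ)| ≤ r}).toReal <
        ∑ i, (Pr {ω | |y i ω - (inner ℝ (x i ω) βstar : ℝ)| ≤ r}).toReal := by
  intro β hβ
  have : Nonempty (Fin n) := ⟨⟨0, hn⟩⟩
  refine Finset.sum_lt_sum_of_nonempty Finset.univ_nonempty fun i _ => ?_
  have hresidual : ∀ b ω, y i ω - ⟪x i ω, b⟫ = ε i ω + ⟪x i ω, βstar - b⟫ := fun b ω => by
    rw [hy, inner_sub_right]; ring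
  have hwindow : ∀ a b, Pr.map (ε i) (Icc a b) = ∫⁻ t in Icc a b, ENNReal.ofReal (g i t) :=
    fun a b => by rw [hg_dens, withDensity_apply _ measurableSet_Icc]
  simp only [hresidual, sub_self, inner_zero_right, add_zero]
  refine (ENNReal.toReal_lt_toReal (measure_ne_top _ _) (measure_ne_top _ _)).mpr ?_
  refine measure_abs_add_inner_le_lt volume (hx_meas i) (hε_meas i) (hxε_indep i) (hx_ac i)
    (fun c hc => ?_) (sub_ne_zero.mpr hβ.symm)
  rw [hwindow, hwindow]
  exact setLIntegral_Icc_shift_lt (hg_meas i).ennreal_ofReal (fun t => by rw [hg_symm])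
    ((hg_anti i).ennreal_ofReal fun t _ => hg_nonneg i t) (hwindow _ _ ▸ measure_ne_top _ _) hr hc

/-- In the linear model `y_i = ⟪x_i, β*⟫ + ε_i`, with `x_i` absolutely
continuous, `ε_i ⟂ x_i` having a density symmetric about `0` and strictly
decreasing on `[0,∞)`, the true parameter `β*` is the unique maximizer of
`F(β) = ∑ P(|y_i − ⟪x_i, β⟫| ≤ r)`. -/
theorem regression_population_maximizer
    {Ω : Type*} [MeasurableSpace Ω] (Pr : Measure Ω) [IsProbabilityMeasure Pr]
    (n d : ℕ) (hn : 1 ≤ n) (r : ℝ) (hr : 0 < r)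
    (x : Fin n → Ω → EuclideanSpace ℝ (Fin d)) (ε : Fin n → Ω → ℝ)
    (hx_meas : ∀ i, Measurable (x i)) (hε_meas : ∀ i, Measurable (ε i))
    (hindep_pairs : iIndepFun
      (fun i ω => (x i ω, ε i ω)) Pr)
    (hxε_indep : ∀ i, IndepFun (x i) (ε i) Pr)
    (hx_ac : ∀ i, Measure.map (x i) Pr ≪ (volume : Measure (EuclideanSpace ℝ (Fin d))))
    (g : Fin n → ℝ → ℝ) (hg_meas : ∀ i, Measurable (g i))
    (hg_nonneg : ∀ i t, 0 ≤ g i t)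
    (hg_dens : ∀ i, Measure.map (ε i) Pr
      = volume.withDensity (fun t => ENNReal.ofReal (g i t)))
    (hg_symm : ∀ i t, g i (-t) = g i t)
    (hg_anti : ∀ i, StrictAntiOn (g i) (Set.Ici 0))
    (βstar : EuclideanSpace ℝ (Fin d))
    (y : Fin n → Ω → ℝ)
    (hy : ∀ i ω, y i ω = (inner ℝ (x i ω) βstar : ℝ) + ε i ω) :
    ∀ β : EuclideanSpace ℝ (Fin d), β ≠ βstar →
      ∑ i, (Pr {ω | |y i ω - (inner ℝ (x i ω) β : ℝ)| ≤ r}).toReal <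
        ∑ i, (Pr {ω | |y i ω - (inner ℝ (x i ω) βstar : ℝ)| ≤ r}).toReal :=
  regression_population_maximizer_general Pr n d hn r hr x ε hx_meas hε_meas hxε_indep hx_ac g
    hg_meas hg_nonneg hg_dens hg_symm hg_anti βstar y hy
end

section
/- Let U₁,...,U_n ⊆ ℝ^d be slabs of the form U_i = {β : y_i − r ≤ x_iᵀβ ≤ y_i + r} (each bounded by two parallel hyperplanes), and let f(β) = Σ_{i=1}^n 1{β ∈ U_i}. Then f attains its maximum over ℝ^d at some point β that is the intersection of d of the 2n bounding hyperplanes {x_iᵀβ = y_i ± r} (whenever such an intersection point is well-defined and the maximum of f exceeds the value attained at infinity); more precisely, since f is upper semicontinuous and piecewise constant on the cells of the hyperplane arrangement, sup_β f(β) is attained at a vertex of the arrangement or on an unbounded cell, and in the generic case the maximizer can be taken among the at most C(2n, d) vertices. -/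
/-!
Start from any maximiser `β` and grow a linearly independent set `E` of slabs on whose boundary
`β` lies. While `#E < d`, pick `v ≠ 0` orthogonal to the normals in `E`. If `v` is also orthogonal
to the normals of all slabs containing `β`, the whole line `β + ℝ v` consists of maximisers, so
they have arbitrarily large norm. Otherwise move along `v` until the first of these slabs is about
to be left: no slab is lost, the boundaries in `E` are kept, and a new boundary is reached whose
normal lies outside the span of those in `E`.
-/

open Module Finset
open scoped InnerProductSpace

section ExitTime

-- the time at which `t ↦ w - t * c` reaches `-r` (if `c > 0`) or `r` (if `c < 0`)
noncomputable def exitTime (w c r : ℝ) : ℝ := if 0 < c then (w + r) / c else (w - r) / c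

variable {w c r t : ℝ}

lemma exitTime_nonneg (hw : |w| ≤ r) : 0 ≤ exitTime w c r := by
  obtain ⟨hlo, hhi⟩ := abs_le.mp hw
  unfold exitTime
  split_ifs with hpos
  · exact div_nonneg (by linarith) hpos.le
  · exact div_nonneg_of_nonpos (by linarith) (not_lt.mp hpos)

lemma abs_sub_mul_le_of_le_exitTime (hw : |w| ≤ r) (hc : c ≠ 0) (ht₀ : 0 ≤ t)
    (ht : t ≤ exitTime w c r) : |w - t * c| ≤ r := by
  obtain ⟨hlo, hhi⟩ := abs_le.mp hw
  unfold exitTime at ht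
  rw [abs_le]
  split_ifs at ht with hpos
  · have := (le_div_iff₀ hpos).mp ht
    constructor <;> nlinarith
  · have hneg := lt_of_le_of_ne (not_lt.mp hpos) hc
    have := (le_div_iff_of_neg hneg).mp ht
    constructor <;> nlinarith

lemma abs_sub_exitTime_mul (hw : |w| ≤ r) (hc : c ≠ 0) : |w - exitTime w c r * c| = r := by
  have hr : 0 ≤ r := (abs_nonneg w).trans hw
  unfold exitTime
  split_ifs
  · rw [div_mul_cancel₀ _ hc, sub_add_cancel_left, abs_neg, abs_of_nonneg hr]
  · rw [div_mul_cancel₀ _ hc, sub_sub_cancel, abs_of_nonneg hr]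

end ExitTime

lemma eq_add_ite_of_abs_sub_eq {a b r : ℝ} (h : |a - b| = r) :
    b = a + if a < b then r else -r := by
  split_ifs with hab
  · rw [abs_of_neg (sub_neg.mpr hab)] at h
    linarith
  · rw [abs_of_nonneg (sub_nonneg.mpr (not_lt.mp hab))] at h
    linarith

lemma exists_le_norm_add_smul {V : Type*} [NormedAddCommGroup V] [NormedSpace ℝ V]
    (β : V) {v : V} (hv : v ≠ 0) (M : ℝ) : ∃ t : ℝ, M ≤ ‖β + t • v‖ := by
  have hv' : 0 < ‖v‖ := norm_pos_iff.mpr hv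
  refine ⟨(|M| + ‖β‖) / ‖v‖, ?_⟩
  have hnorm : ‖((|M| + ‖β‖) / ‖v‖) • v‖ = |M| + ‖β‖ := by
    rw [norm_smul, Real.norm_of_nonneg (by positivity), div_mul_cancel₀ _ hv'.ne']
  have := norm_sub_le (β + ((|M| + ‖β‖) / ‖v‖) • v) β
  rw [add_sub_cancel_left, hnorm] at this
  linarith [le_abs_self M]

lemma exists_ne_zero_mem_orthogonal_span_image {ι V : Type*} [NormedAddCommGroup V]
    [InnerProductSpace ℝ V] [FiniteDimensional ℝ V] (x : ι → V) {E : Finset ι}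
    (h : #E < finrank ℝ V) : ∃ v ∈ (Submodule.span ℝ (x '' E))ᗮ, v ≠ 0 := by
  have hne : Submodule.span ℝ (x '' E) ≠ ⊤ := by
    intro htop
    have hle : finrank ℝ (Submodule.span ℝ (x '' E)) ≤ #E := by
      rw [Set.image_eq_range]
      exact (finrank_range_le_card _).trans_eq (Fintype.card_coe E)
    rw [htop, finrank_top] at hle
    omega
  exact Submodule.exists_mem_ne_zero_of_ne_bot (mt Submodule.orthogonal_eq_bot_iff.mp hne)

lemma sub_inner_add_smul {V : Type*} [NormedAddCommGroup V] [InnerProductSpace ℝ V]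
    (w : ℝ) (a β v : V) (t : ℝ) : w - ⟪a, β + t • v⟫_ℝ = (w - ⟪a, β⟫_ℝ) - t * ⟪a, v⟫_ℝ := by
  rw [inner_add_right, real_inner_smul_right, sub_add_eq_sub_sub]

section Slabs

variable {ι V : Type*} [Fintype ι] [NormedAddCommGroup V] [InnerProductSpace ℝ V]
  (x : ι → V) (y : ι → ℝ) (r : ℝ)

noncomputable def activeSlabs (β : V) : Finset ι :=
  {i | |y i - ⟪x i, β⟫_ℝ| ≤ r}

variable {x y r}

@[simp]
lemma mem_activeSlabs {β : V} {i : ι} : i ∈ activeSlabs x y r β ↔ |y i - ⟪x i, β⟫_ℝ| ≤ r := by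
  simp [activeSlabs]

lemma exists_forall_card_activeSlabs_le :
    ∃ β : V, ∀ γ, #(activeSlabs x y r γ) ≤ #(activeSlabs x y r β) := by
  obtain ⟨_, ⟨β, rfl⟩, hβ⟩ := Set.exists_max_image (Set.range (activeSlabs x y r)) Finset.card
    (Set.toFinite _) (Set.range_nonempty _)
  exact ⟨β, fun γ => hβ _ ⟨γ, rfl⟩⟩

lemma activeSlabs_subset_add_smul {β v : V} (hv : ∀ i ∈ activeSlabs x y r β, ⟪x i, v⟫_ℝ = 0)
    (t : ℝ) : activeSlabs x y r β ⊆ activeSlabs x y r (β + t • v) := by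
  intro i hi
  rw [mem_activeSlabs, sub_inner_add_smul, hv i hi, mul_zero, sub_zero]
  exact mem_activeSlabs.mp hi

lemma exists_activeSlabs_subset_add_smul_of_inner_ne_zero {β v : V} {j : ι}
    (hj : j ∈ activeSlabs x y r β) (hjv : ⟪x j, v⟫_ℝ ≠ 0) :
    ∃ (k : ι) (t : ℝ), ⟪x k, v⟫_ℝ ≠ 0 ∧ activeSlabs x y r β ⊆ activeSlabs x y r (β + t • v) ∧
      |y k - ⟪x k, β + t • v⟫_ℝ| = r := by
  classical
  set τ : ι → ℝ := fun i => exitTime (y i - ⟪x i, β⟫_ℝ) ⟪x i, v⟫_ℝ r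
  set B := (activeSlabs x y r β).filter fun i => ⟪x i, v⟫_ℝ ≠ 0
  obtain ⟨k, hkB, hk⟩ := B.exists_min_image τ ⟨j, mem_filter.mpr ⟨hj, hjv⟩⟩
  obtain ⟨hkβ, hkv⟩ := mem_filter.mp hkB
  refine ⟨k, τ k, hkv, fun i hi => ?_, ?_⟩
  · rw [mem_activeSlabs, sub_inner_add_smul]
    by_cases hiv : ⟪x i, v⟫_ℝ = 0
    · rwa [hiv, mul_zero, sub_zero, ← mem_activeSlabs]
    · exact abs_sub_mul_le_of_le_exitTime (mem_activeSlabs.mp hi) hiv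
        (exitTime_nonneg (mem_activeSlabs.mp hkβ)) (hk i (mem_filter.mpr ⟨hi, hiv⟩))
  · rw [sub_inner_add_smul]
    exact abs_sub_exitTime_mul (mem_activeSlabs.mp hkβ) hkv

variable (x y r) in
def IsArrangementVertex (β : V) : Prop :=
  ∃ T : Finset ι, #T = finrank ℝ V ∧ LinearIndepOn ℝ x (T : Set ι) ∧
    ∀ i ∈ T, |y i - ⟪x i, β⟫_ℝ| = r

theorem exists_isArrangementVertex_or_unbounded_of_tight [FiniteDimensional ℝ V] {β : V}
    (hβ : ∀ γ, #(activeSlabs x y r γ) ≤ #(activeSlabs x y r β)) (E : Finset ι)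
    (hE : LinearIndepOn ℝ x (E : Set ι)) (htight : ∀ i ∈ E, |y i - ⟪x i, β⟫_ℝ| = r) :
    ∃ β₀, (∀ γ, #(activeSlabs x y r γ) ≤ #(activeSlabs x y r β₀)) ∧
      (IsArrangementVertex x y r β₀ ∨
        ∀ M : ℝ, ∃ γ, M ≤ ‖γ‖ ∧ #(activeSlabs x y r β₀) ≤ #(activeSlabs x y r γ)) := by
  classical
  have hcard : #E ≤ finrank ℝ V := by simpa using hE.fintype_card_le_finrank
  obtain hEd | hEd := hcard.eq_or_lt
  · exact ⟨β, hβ, Or.inl ⟨E, hEd, hE, htight⟩⟩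
  obtain ⟨v, hv, hv0⟩ := exists_ne_zero_mem_orthogonal_span_image x hEd
  have hvE : ∀ i ∈ E, ⟪x i, v⟫_ℝ = 0 := fun i hi =>
    Submodule.inner_right_of_mem_orthogonal (Submodule.subset_span (Set.mem_image_of_mem x hi)) hv
  by_cases hflat : ∀ i ∈ activeSlabs x y r β, ⟪x i, v⟫_ℝ = 0
  · refine ⟨β, hβ, Or.inr fun M => ?_⟩
    obtain ⟨t, ht⟩ := exists_le_norm_add_smul β hv0 M
    exact ⟨β + t • v, ht, card_le_card (activeSlabs_subset_add_smul hflat t)⟩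
  push Not at hflat
  obtain ⟨j, hj, hjv⟩ := hflat
  obtain ⟨k, t, hkv, hsub, hk⟩ := exists_activeSlabs_subset_add_smul_of_inner_ne_zero hj hjv
  have hkE : k ∉ E := fun h => hkv (hvE k h)
  have hind : LinearIndepOn ℝ x (insert k E : Finset ι) := by
    rw [coe_insert, linearIndepOn_insert (by simpa using hkE)]
    exact ⟨hE, fun hmem => hkv (Submodule.inner_right_of_mem_orthogonal hmem hv)⟩
  have htight' : ∀ i ∈ insert k E, |y i - ⟪x i, β + t • v⟫_ℝ| = r := by
    intro i hi
    rcases mem_insert.mp hi with rfl | hiE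
    · exact hk
    · rw [sub_inner_add_smul, hvE i hiE, mul_zero, sub_zero, htight i hiE]
  exact exists_isArrangementVertex_or_unbounded_of_tight
    (fun γ => (hβ γ).trans (card_le_card hsub)) (insert k E) hind htight'
termination_by finrank ℝ V - #E
decreasing_by classical rw [card_insert_of_notMem hkE]; omega

end Slabs

theorem modal_regression_attained_at_vertex_general
    (n d : ℕ)
    (x : Fin n → EuclideanSpace ℝ (Fin d)) (y : Fin n → ℝ)
    (r : ℝ)
    (f : EuclideanSpace ℝ (Fin d) → ℕ)
    (hf : ∀ β, f β =
      (Finset.univ.filter (fun i : Fin n => |y i - (inner ℝ (x i) β : ℝ)| ≤ r)).card) :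
    ∃ β₀ : EuclideanSpace ℝ (Fin d),
      (∀ β, f β ≤ f β₀) ∧
      ((∃ (s : Fin n → Bool) (T : Finset (Fin n)), T.card = d ∧
          LinearIndependent ℝ (fun i : T => x i) ∧
          ∀ i ∈ T, (inner ℝ (x i) β₀ : ℝ) = y i + (if s i then r else -r))
        ∨ (∀ M : ℝ, ∃ β, M ≤ ‖β‖ ∧ f β₀ ≤ f β)) := by
  obtain rfl : f = fun β => #(activeSlabs x y r β) := funext hf
  obtain ⟨β₁, hβ₁⟩ := exists_forall_card_activeSlabs_le (x := x) (y := y) (r := r)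
  obtain ⟨β₀, hmax, ⟨T, hT, hind, htight⟩ | hunbounded⟩ :=
    exists_isArrangementVertex_or_unbounded_of_tight hβ₁ ∅ (by simp) (by simp)
  · refine ⟨β₀, hmax, Or.inl ⟨fun i => y i < ⟪x i, β₀⟫_ℝ, T, ?_, hind, fun i hi => ?_⟩⟩
    · rwa [finrank_euclideanSpace_fin] at hT
    · simpa using eq_add_ite_of_abs_sub_eq (htight i hi)
  · exact ⟨β₀, hmax, Or.inr hunbounded⟩

/-- Maximizing the number of slabs containing a point: the count function
`f(β) = #{i : |y_i − ⟪x_i, β⟫| ≤ r}` attains its maximum either at a vertex of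
the hyperplane arrangement (a point where `d` of the bounding hyperplanes
`⟪x_i, β⟫ = y_i ± r` with linearly independent normals meet) or the maximal
value is attained at points of arbitrarily large norm (an unbounded cell). -/
theorem modal_regression_attained_at_vertex
    (n d : ℕ) (hd : 0 < d)
    (x : Fin n → EuclideanSpace ℝ (Fin d)) (y : Fin n → ℝ)
    (r : ℝ) (hr : 0 < r)
    (f : EuclideanSpace ℝ (Fin d) → ℕ)
    (hf : ∀ β, f β =
      (Finset.univ.filter (fun i : Fin n => |y i - (inner ℝ (x i) β : ℝ)| ≤ r)).card) :
    ∃ β₀ : EuclideanSpace ℝ (Fin d),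
      (∀ β, f β ≤ f β₀) ∧
      ((∃ (s : Fin n → Bool) (T : Finset (Fin n)), T.card = d ∧
          LinearIndependent ℝ (fun i : T => x i) ∧
          ∀ i ∈ T, (inner ℝ (x i) β₀ : ℝ) = y i + (if s i then r else -r))
        ∨ (∀ M : ℝ, ∃ β, M ≤ ‖β‖ ∧ f β₀ ≤ f β)) :=
  modal_regression_attained_at_vertex_general n d x y r f hf
end
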